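/- Let M = [m_{ij}] be an n×n real Nekrasov matrix with m_{ii} > 0 for all i, such that for each i = 1,…,n−1 there exists j > i with m_{ij} ≠ 0. Set w_i = h_i(M)/m_{ii} for i = 1,…,n−1, and w_n = h_n(M)/m_{nn} + ε for a fixed ε ∈ (0, 1 − h_n(M)/m_{nn}). Set s_i = Σ_{j=i+1}^{n} |m_{ij}| (1 − w_j) for i = 1,…,n−1 and s_n = ε m_{nn}. Then for every diagonal matrix D = diag(d_1,…,d_n) with 0 ≤ d_i ≤ 1 for all i, the matrix I − D + DM is invertible and ‖(I − D + DM)^{-1}‖_∞ ≤ max{ (max_i w_i)/(min_i s_i), (max_i w_i)/(min_i w_i) }. -/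
import Mathlib


open Finset

noncomputable def nekH {n : ℕ} {𝕜 : Type*} [RCLike 𝕜] (A : Matrix (Fin n) (Fin n) 𝕜) : Fin n → ℝ
  | i =>
    (∑ j : Fin n, if h : j < i then ‖A i j‖ / ‖A j j‖ * nekH A j else 0)
      + ∑ j : Fin n, if i < j then ‖A i j‖ else 0
termination_by i => i.val
decreasing_by exact h

def IsNekrasov {n : ℕ} {𝕜 : Type*} [RCLike 𝕜] (A : Matrix (Fin n) (Fin n) 𝕜) : Prop :=
  ∀ i, nekH A i < ‖A i i‖

noncomputable def nekZ {n : ℕ} {𝕜 : Type*} [RCLike 𝕜] (A : Matrix (Fin n) (Fin n) 𝕜) : Fin n → ℝ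
  | i => (∑ j : Fin n, if h : j < i then ‖A i j‖ / ‖A j j‖ * nekZ A j else 0) + 1
termination_by i => i.val
decreasing_by exact h

noncomputable def nekEta {n : ℕ} {𝕜 : Type*} [RCLike 𝕜] (M : Matrix (Fin n) (Fin n) 𝕜) : Fin n → ℝ
  | i => (∑ j : Fin n, if h : j < i then ‖M i j‖ / min ‖M j j‖ 1 * nekEta M j else 0) + 1
termination_by i => i.val
decreasing_by exact h

noncomputable def linftyNorm {n : ℕ} {𝕜 : Type*} [RCLike 𝕜] (A : Matrix (Fin n) (Fin n) 𝕜) : ℝ :=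
  ⨆ i, ∑ j, ‖A i j‖

noncomputable def rPlus {n : ℕ} (M : Matrix (Fin n) (Fin n) ℝ) (i : Fin n) : ℝ :=
  Finset.fold max 0 (fun j => M i j) (Finset.univ.erase i)

noncomputable def BPlus {n : ℕ} (M : Matrix (Fin n) (Fin n) ℝ) : Matrix (Fin n) (Fin n) ℝ :=
  Matrix.of fun i j => M i j - rPlus M i

def IsBNekrasov {n : ℕ} (M : Matrix (Fin n) (Fin n) ℝ) : Prop :=
  IsNekrasov (BPlus M) ∧ ∀ i, 0 < BPlus M i i

def IsLCPSolution {n : ℕ} (M : Matrix (Fin n) (Fin n) ℝ) (q x : Fin n → ℝ) : Prop :=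
  (∀ i, 0 ≤ x i) ∧ (∀ i, 0 ≤ (M.mulVec x + q) i) ∧ ∑ i, (M.mulVec x + q) i * x i = 0

def IsPMatrix {n : ℕ} (M : Matrix (Fin n) (Fin n) ℝ) : Prop :=
  ∀ S : Finset (Fin n), 0 < (M.submatrix (fun i : S => (i : Fin n)) (fun j : S => (j : Fin n))).det


lemma nekH_apply {n : ℕ} (A : Matrix (Fin n) (Fin n) ℝ) (i : Fin n) :
    nekH A i = (∑ j : Fin n, if _ : j < i then ‖A i j‖ / ‖A j j‖ * nekH A j else 0)
      + ∑ j : Fin n, if i < j then ‖A i j‖ else 0 := by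
  rw [nekH]

lemma nekH_nonneg {n : ℕ} (A : Matrix (Fin n) (Fin n) ℝ) : ∀ i, 0 ≤ nekH A i := by
  suffices h : ∀ k : ℕ, ∀ i : Fin n, i.val = k → 0 ≤ nekH A i from fun i => h i.val i rfl
  intro k
  induction k using Nat.strong_induction_on with
  | _ k ih =>
    intro i hik
    rw [nekH_apply]
    apply add_nonneg
    · apply Finset.sum_nonneg; intro j _
      split
      · rename_i hj
        exact mul_nonneg (div_nonneg (norm_nonneg _) (norm_nonneg _))
          (ih j.val (hik ▸ hj) j rfl)
      · exact le_refl 0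
    · exact Finset.sum_nonneg fun j _ => by positivity

lemma erase_sum_split {n : ℕ} (f : Fin n → ℝ) (i : Fin n) :
    ∑ j ∈ Finset.univ.erase i, f j =
      (∑ j, if j < i then f j else 0) + ∑ j, if i < j then f j else 0 := by
  have h1 : ∑ j ∈ Finset.univ.erase i, f j = (∑ j, f j) - f i :=
    Finset.sum_erase_eq_sub (Finset.mem_univ i)
  have h2 : ∀ j : Fin n, f j =
      (if j < i then f j else 0) + (if i < j then f j else 0) + (if j = i then f j else 0) := by
    intro j
    rcases lt_trichotomy j i with h | h | h
    · simp [h, h.ne, not_lt_of_gt h]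
    · simp [h]
    · simp [h, h.ne', not_lt_of_gt h]
  rw [h1, Finset.sum_congr rfl fun j _ => h2 j]
  simp [Finset.sum_add_distrib, Finset.sum_ite_eq' Finset.univ i f]

lemma varah {n : ℕ} (hn : 0 < n) (B : Matrix (Fin n) (Fin n) ℝ) (α : ℝ) (hα : 0 < α)
    (hSDD : ∀ i, (∑ j ∈ Finset.univ.erase i, |B i j|) + α ≤ B i i) :
    IsUnit B.det ∧ ∀ i, ∑ j, |B⁻¹ i j| ≤ 1 / α := by
  have hne : (Finset.univ : Finset (Fin n)).Nonempty := ⟨⟨0, hn⟩, mem_univ _⟩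
  have hsub : ∀ x : Fin n → ℝ, ∀ i, α * |x i| ≤
      Finset.univ.sup' hne (fun j => |B.mulVec x j|) := by
    intro x i
    obtain ⟨i0, _, hi0⟩ := Finset.exists_mem_eq_sup' hne (fun j => |x j|)
    have hmax : ∀ j, |x j| ≤ |x i0| := by
      intro j; rw [← hi0]; exact Finset.le_sup' (fun j => |x j|) (mem_univ j)
    have key : α * |x i0| ≤ |B.mulVec x i0| := by
      have hmv : B.mulVec x i0 = B i0 i0 * x i0 + ∑ j ∈ Finset.univ.erase i0, B i0 j * x j := by
        rw [Matrix.mulVec, dotProduct]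
        rw [← Finset.add_sum_erase _ _ (Finset.mem_univ i0)]
      have h1 : |∑ j ∈ Finset.univ.erase i0, B i0 j * x j| ≤
          (∑ j ∈ Finset.univ.erase i0, |B i0 j|) * |x i0| := by
        calc |∑ j ∈ Finset.univ.erase i0, B i0 j * x j|
            ≤ ∑ j ∈ Finset.univ.erase i0, |B i0 j * x j| := Finset.abs_sum_le_sum_abs _ _
          _ ≤ ∑ j ∈ Finset.univ.erase i0, |B i0 j| * |x i0| := by
              apply Finset.sum_le_sum; intro j _
              rw [abs_mul]
              exact mul_le_mul_of_nonneg_left (hmax j) (abs_nonneg _)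
          _ = _ := by rw [← Finset.sum_mul]
      have h2 : (∑ j ∈ Finset.univ.erase i0, |B i0 j|) + α ≤ B i0 i0 := hSDD i0
      have h3 : B i0 i0 * |x i0| ≤ |B i0 i0 * x i0| := by
        rw [abs_mul, abs_of_nonneg (le_trans (by positivity) h2)]
      calc α * |x i0| ≤ B i0 i0 * |x i0| - (∑ j ∈ Finset.univ.erase i0, |B i0 j|) * |x i0| := by
            nlinarith [abs_nonneg (x i0)]
        _ ≤ |B i0 i0 * x i0| - |∑ j ∈ Finset.univ.erase i0, B i0 j * x j| := by linarith
        _ ≤ |B.mulVec x i0| := by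
            rw [hmv]
            have h4 : |B i0 i0 * x i0| ≤
                |B i0 i0 * x i0 + ∑ j ∈ Finset.univ.erase i0, B i0 j * x j| +
                  |∑ j ∈ Finset.univ.erase i0, B i0 j * x j| := by
              have := abs_add_le (B i0 i0 * x i0 + ∑ j ∈ Finset.univ.erase i0, B i0 j * x j)
                (-(∑ j ∈ Finset.univ.erase i0, B i0 j * x j))
              simpa [abs_sub_comm] using this
            linarith
    calc α * |x i| ≤ α * |x i0| := by nlinarith [hmax i]
      _ ≤ |B.mulVec x i0| := key
      _ ≤ _ := Finset.le_sup' (fun j => |B.mulVec x j|) (mem_univ i0)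
  have hdet : B.det ≠ 0 := by
    intro h
    rw [← Matrix.exists_mulVec_eq_zero_iff] at h
    obtain ⟨v, hv, hBv⟩ := h
    apply hv
    funext i
    have h1 := hsub v i
    rw [hBv] at h1
    have h2 : α * |v i| ≤ 0 := by simpa [Finset.sup'_const] using h1
    have h3 : |v i| ≤ 0 := by nlinarith
    simpa using le_antisymm h3 (abs_nonneg _)
  have hunit : IsUnit B.det := isUnit_iff_ne_zero.mpr hdet
  refine ⟨hunit, fun i => ?_⟩
  set y : Fin n → ℝ := fun j => if 0 ≤ B⁻¹ i j then 1 else -1 with hy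
  set x : Fin n → ℝ := B⁻¹.mulVec y with hx
  have hBx : B.mulVec x = y := by
    rw [hx, Matrix.mulVec_mulVec, Matrix.mul_nonsing_inv B hunit, Matrix.one_mulVec]
  have hyb : ∀ j, |y j| ≤ 1 := by
    intro j; rw [hy]; dsimp only; split <;> simp
  have hxb : α * |x i| ≤ 1 := by
    refine le_trans (hsub x i) ?_
    apply Finset.sup'_le
    intro j _
    rw [hBx]; exact hyb j
  have hsum : ∑ j, |B⁻¹ i j| = x i := by
    rw [hx, Matrix.mulVec, dotProduct]
    apply Finset.sum_congr rfl
    intro j _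
    rw [hy]; dsimp only
    split
    · rename_i h; rw [abs_of_nonneg h, mul_one]
    · rename_i h; rw [abs_of_neg (lt_of_not_ge h)]; ring
  rw [hsum]
  rw [le_div_iff₀ hα]
  calc x i * α ≤ |x i| * α := by nlinarith [le_abs_self (x i), abs_nonneg (x i)]
    _ ≤ 1 := by nlinarith


theorem stmt14 {n : ℕ} (hn : 0 < n) (M : Matrix (Fin n) (Fin n) ℝ)
    (hdiag : ∀ i, 0 < M i i) (hNek : IsNekrasov M)
    (hrow : ∀ i : Fin n, i.val + 1 < n → ∃ j, i < j ∧ M i j ≠ 0)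
    (ε : ℝ) (hε : 0 < ε)
    (hε' : ε < 1 - nekH M ⟨n - 1, by omega⟩ / M ⟨n - 1, by omega⟩ ⟨n - 1, by omega⟩)
    (w s : Fin n → ℝ)
    (hw : ∀ i : Fin n, i.val + 1 < n → w i = nekH M i / M i i)
    (hwn : w ⟨n - 1, by omega⟩ =
      nekH M ⟨n - 1, by omega⟩ / M ⟨n - 1, by omega⟩ ⟨n - 1, by omega⟩ + ε)
    (hs : ∀ i : Fin n, i.val + 1 < n →
      s i = ∑ j, if i < j then |M i j| * (1 - w j) else 0)
    (hsn : s ⟨n - 1, by omega⟩ = ε * M ⟨n - 1, by omega⟩ ⟨n - 1, by omega⟩)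
    (d : Fin n → ℝ) (hd : ∀ i, 0 ≤ d i ∧ d i ≤ 1) :
    IsUnit (1 - Matrix.diagonal d + Matrix.diagonal d * M).det ∧
      linftyNorm (1 - Matrix.diagonal d + Matrix.diagonal d * M)⁻¹ ≤
        max
          (Finset.univ.sup' ⟨⟨0, hn⟩, Finset.mem_univ _⟩ w /
            Finset.univ.inf' ⟨⟨0, hn⟩, Finset.mem_univ _⟩ s)
          (Finset.univ.sup' ⟨⟨0, hn⟩, Finset.mem_univ _⟩ w /
            Finset.univ.inf' ⟨⟨0, hn⟩, Finset.mem_univ _⟩ w) := by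
  classical
  have hl : n - 1 < n := by omega
  set l : Fin n := ⟨n - 1, hl⟩ with hldef
  have hwn' : w l = nekH M l / M l l + ε := hwn
  have hsn' : s l = ε * M l l := hsn
  have hε'' : ε < 1 - nekH M l / M l l := hε'
  have hMne : ∀ i : Fin n, M i i ≠ 0 := fun i => (hdiag i).ne'
  have hH0 : ∀ i, 0 ≤ nekH M i := nekH_nonneg M
  have hHlt : ∀ i, nekH M i < M i i := by
    intro i
    have := hNek i
    rwa [Real.norm_eq_abs, abs_of_pos (hdiag i)] at this
  have hcases : ∀ i : Fin n, i.val + 1 < n ∨ i = l := by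
    intro i
    by_cases h : i.val + 1 < n
    · exact Or.inl h
    · right; apply Fin.ext; simp only [hldef]; omega
  have hnotlast : ∀ j : Fin n, ¬ l < j := by
    intro j hj
    rw [Fin.lt_def] at hj
    have := j.isLt
    simp only [hldef] at hj
    omega
  have hwlt1 : ∀ i, w i < 1 := by
    intro i
    rcases hcases i with h | h
    · rw [hw i h]
      exact (div_lt_one (hdiag i)).mpr (hHlt i)
    · rw [h, hwn']; linarith
  have hwpos : ∀ i, 0 < w i := by
    intro i
    rcases hcases i with h | h
    · rw [hw i h]
      apply div_pos _ (hdiag i)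
      obtain ⟨j0, hij0, hMij0⟩ := hrow i h
      rw [nekH_apply]
      have h2 : 0 < ∑ j, if i < j then ‖M i j‖ else 0 := by
        apply Finset.sum_pos' (fun j _ => by positivity)
        refine ⟨j0, Finset.mem_univ _, ?_⟩
        rw [if_pos hij0]
        exact norm_pos_iff.mpr hMij0
      have h1 : 0 ≤ ∑ j : Fin n, if _ : j < i then ‖M i j‖ / ‖M j j‖ * nekH M j else 0 := by
        apply Finset.sum_nonneg; intro j _
        split
        · exact mul_nonneg (div_nonneg (norm_nonneg _) (norm_nonneg _)) (hH0 j)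
        · exact le_refl 0
      linarith
    · rw [h, hwn']
      have : 0 ≤ nekH M l / M l l := div_nonneg (hH0 _) (hdiag _).le
      linarith
  have hspos : ∀ i, 0 < s i := by
    intro i
    rcases hcases i with h | h
    · rw [hs i h]
      obtain ⟨j0, hij0, hMij0⟩ := hrow i h
      apply Finset.sum_pos'
      · intro j _
        split
        · exact mul_nonneg (abs_nonneg _) (by linarith [hwlt1 j])
        · exact le_refl 0
      · refine ⟨j0, Finset.mem_univ _, ?_⟩
        rw [if_pos hij0]
        exact mul_pos (abs_pos.mpr hMij0) (by linarith [hwlt1 j0])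
    · rw [h, hsn']
      exact mul_pos hε (hdiag l)
  -- key identity
  have hkey : ∀ i, M i i * w i = (∑ j ∈ Finset.univ.erase i, |M i j| * w j) + s i := by
    intro i
    rw [erase_sum_split (fun j => |M i j| * w j) i]
    have hdite : ∀ (hi : ∀ j : Fin n, j < i → j.val + 1 < n),
        (∑ j : Fin n, if _ : j < i then ‖M i j‖ / ‖M j j‖ * nekH M j else 0)
          = ∑ j : Fin n, if j < i then |M i j| * w j else 0 := by
      intro hi
      apply Finset.sum_congr rfl
      intro j _
      by_cases hj : j < i
      · rw [dif_pos hj, if_pos hj, hw j (hi j hj), Real.norm_eq_abs, Real.norm_eq_abs,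
          abs_of_pos (hdiag j), div_mul_eq_mul_div, mul_div_assoc]
      · rw [dif_neg hj, if_neg hj]
    rcases hcases i with h | h
    · have hi : ∀ j : Fin n, j < i → j.val + 1 < n := by
        intro j hj; rw [Fin.lt_def] at hj; omega
      have hMw : M i i * w i = nekH M i := by
        rw [hw i h, mul_comm, div_mul_cancel₀ _ (hMne i)]
      rw [hMw, nekH_apply, hdite hi, hs i h]
      have hsplit : ∀ j : Fin n, (if i < j then ‖M i j‖ else 0) =
          (if i < j then |M i j| * w j else 0) + (if i < j then |M i j| * (1 - w j) else 0) := by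
        intro j
        by_cases hj : i < j
        · simp only [if_pos hj, Real.norm_eq_abs]; ring
        · simp [hj]
      rw [Finset.sum_congr rfl fun j _ => hsplit j, Finset.sum_add_distrib]
      ring
    · subst h
      have hi : ∀ j : Fin n, j < l → j.val + 1 < n := by
        intro j hj; rw [Fin.lt_def] at hj; simp only [hldef] at hj; omega
      have hMw : M l l * w l = nekH M l + ε * M l l := by
        rw [hwn', mul_add, mul_comm (M l l) (nekH M l / M l l), div_mul_cancel₀ _ (hMne l)]
        ring
      have hz1 : (∑ j : Fin n, if l < j then ‖M l j‖ else 0) = 0 :=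
        Finset.sum_eq_zero fun j _ => if_neg (hnotlast j)
      have hz2 : (∑ j : Fin n, if l < j then |M l j| * w j else 0) = 0 :=
        Finset.sum_eq_zero fun j _ => if_neg (hnotlast j)
      rw [hMw, nekH_apply, hdite hi, hz1, hz2, hsn']
  -- setup matrices
  have hne : (Finset.univ : Finset (Fin n)).Nonempty := ⟨⟨0, hn⟩, Finset.mem_univ _⟩
  set A := 1 - Matrix.diagonal d + Matrix.diagonal d * M with hA
  set W := Matrix.diagonal w with hWdef
  set B := A * W with hB
  have hApq : ∀ i j : Fin n, i ≠ j → A i j = d i * M i j := by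
    intro i j hij
    simp [hA, Matrix.add_apply, Matrix.sub_apply, Matrix.one_apply_ne hij,
      Matrix.diagonal_apply_ne _ hij, Matrix.diagonal_mul]
  have hAii : ∀ i : Fin n, A i i = 1 - d i + d i * M i i := by
    intro i
    simp [hA, Matrix.add_apply, Matrix.sub_apply, Matrix.one_apply_eq,
      Matrix.diagonal_apply_eq, Matrix.diagonal_mul]
  have hBij : ∀ i j : Fin n, B i j = A i j * w j := by
    intro i j
    simp [hB, hWdef, Matrix.mul_diagonal]
  set α := min (Finset.univ.inf' hne w) (Finset.univ.inf' hne s) with hαdef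
  have hα : 0 < α := by
    apply lt_min
    · exact (Finset.lt_inf'_iff hne).mpr fun i _ => hwpos i
    · exact (Finset.lt_inf'_iff hne).mpr fun i _ => hspos i
  have hSDD : ∀ i, (∑ j ∈ Finset.univ.erase i, |B i j|) + α ≤ B i i := by
    intro i
    have h1 : ∑ j ∈ Finset.univ.erase i, |B i j|
        = d i * ∑ j ∈ Finset.univ.erase i, |M i j| * w j := by
      rw [Finset.mul_sum]
      apply Finset.sum_congr rfl
      intro j hj
      have hij : j ≠ i := (Finset.mem_erase.mp hj).1
      rw [hBij, hApq i j (Ne.symm hij), abs_mul, abs_mul, abs_of_nonneg (hd i).1,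
        abs_of_pos (hwpos j)]
      ring
    have h2 : B i i = (1 - d i) * w i + d i * (M i i * w i) := by
      rw [hBij, hAii]; ring
    rw [h1, h2, hkey i]
    have hd1 := (hd i).1
    have hd2 := (hd i).2
    have hwi := hwpos i
    have hsi := hspos i
    have hαw : α ≤ w i :=
      le_trans (min_le_left _ _) (Finset.inf'_le _ (Finset.mem_univ i))
    have hαs : α ≤ s i :=
      le_trans (min_le_right _ _) (Finset.inf'_le _ (Finset.mem_univ i))
    nlinarith [mul_nonneg (sub_nonneg.mpr hd2) (sub_nonneg.mpr hαw),
      mul_nonneg hd1 (sub_nonneg.mpr hαs)]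
  obtain ⟨hBdet, hBinv⟩ := varah hn B α hα hSDD
  have hWunit : IsUnit W.det := by
    rw [hWdef, Matrix.det_diagonal]
    exact isUnit_iff_ne_zero.mpr (ne_of_gt (Finset.prod_pos fun i _ => hwpos i))
  have hAdet : IsUnit A.det := by
    have hprod : IsUnit (A.det * W.det) := by rw [← Matrix.det_mul]; exact hBdet
    exact isUnit_of_mul_isUnit_left hprod
  refine ⟨hAdet, ?_⟩
  have hAinv : A⁻¹ = W * B⁻¹ := by
    rw [hB, Matrix.mul_inv_rev, ← Matrix.mul_assoc, Matrix.mul_nonsing_inv W hWunit,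
      Matrix.one_mul]
  have hrowsum : ∀ i, ∑ j, ‖A⁻¹ i j‖ ≤ (Finset.univ.sup' hne w) / α := by
    intro i
    have heq : ∑ j, ‖A⁻¹ i j‖ = w i * ∑ j, |B⁻¹ i j| := by
      rw [hAinv, Finset.mul_sum]
      apply Finset.sum_congr rfl
      intro j _
      rw [hWdef, Matrix.diagonal_mul, Real.norm_eq_abs, abs_mul, abs_of_pos (hwpos i)]
    rw [heq]
    calc w i * ∑ j, |B⁻¹ i j| ≤ w i * (1 / α) :=
          mul_le_mul_of_nonneg_left (hBinv i) (hwpos i).le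
      _ ≤ (Finset.univ.sup' hne w) * (1 / α) :=
          mul_le_mul_of_nonneg_right (Finset.le_sup' w (Finset.mem_univ i)) (by positivity)
      _ = (Finset.univ.sup' hne w) / α := by ring
  have hnonempty : Nonempty (Fin n) := ⟨⟨0, hn⟩⟩
  have hfin : linftyNorm A⁻¹ ≤ (Finset.univ.sup' hne w) / α := by
    rw [linftyNorm]
    exact ciSup_le hrowsum
  refine le_trans hfin ?_
  rcases min_cases (Finset.univ.inf' hne w) (Finset.univ.inf' hne s) with ⟨heq, _⟩ | ⟨heq, _⟩
  · rw [hαdef, heq]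
    exact le_max_right _ _
  · rw [hαdef, heq]
    exact le_max_left _ _
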